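/- Let ρ: G → GL_2(K) be a representation over a field K of characteristic ≠ 2, and suppose some element c in G satisfies ρ(c)^2 = 1 and ρ(c) ≠ ±1 (so ρ(c) has eigenvalues +1 and -1). If ρ is conjugate over an extension of K to an upper triangular representation, then ρ is conjugate to an upper triangular representation already over K. -/

import Mathlib

/-!
Base-changed to `L`, the family has a common eigenvector `v`. It is an eigenvector of the involution
`ρ c`, so its eigenvalue is `ε = ±1`, which lies in `K`. As `ρ c ≠ ±1`, the `ε`-eigenspace of
`ρ c` is a line; it is defined over `K` (the determinant of `ρ c - ε` vanishes already in `K`), so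
it is spanned by some `u ∈ K²`. Then `u` is proportional to `v`, hence a common eigenvector, and
any basis of `K²` starting with `u` triangularizes `ρ`.
-/

open Matrix

variable {K L : Type*} [Field K] [Field L]

namespace Matrix

lemma apply_one_zero_eq_zero_iff {R : Type*} [CommRing R] (T : Matrix (Fin 2) (Fin 2) R) :
    T 1 0 = 0 ↔ ∃ μ : R, T *ᵥ Pi.single 0 1 = μ • Pi.single 0 1 := by
  rw [mulVec_single_one]
  constructor
  · intro h
    refine ⟨T 0 0, funext fun i => ?_⟩
    fin_cases i <;> simp [h]
  · rintro ⟨μ, hμ⟩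
    simpa using congrFun hμ 1

lemma units_conj_mulVec_eq_smul_iff {R n : Type*} [CommRing R] [Fintype n] [DecidableEq n]
    (U : (Matrix n n R)ˣ) (A : Matrix n n R) (w : n → R) (μ : R) :
    ((U : Matrix n n R) * A * (↑U⁻¹ : Matrix n n R)) *ᵥ w = μ • w ↔
      A *ᵥ ((↑U⁻¹ : Matrix n n R) *ᵥ w) = μ • ((↑U⁻¹ : Matrix n n R) *ᵥ w) := by
  constructor
  · intro h
    simpa [mulVec_mulVec, ← Matrix.mul_assoc, mulVec_smul] using
      congrArg ((↑U⁻¹ : Matrix n n R) *ᵥ ·) h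
  · intro h
    simpa [mulVec_mulVec, ← Matrix.mul_assoc, mulVec_smul] using
      congrArg ((U : Matrix n n R) *ᵥ ·) h

lemma exists_units_mulVec_single_eq {u : Fin 2 → K} (hu : u ≠ 0) :
    ∃ P : (Matrix (Fin 2) (Fin 2) K)ˣ, (P : Matrix (Fin 2) (Fin 2) K) *ᵥ Pi.single 0 1 = u := by
  obtain ⟨a, b, hdet⟩ : ∃ a b : K, u 0 * b - a * u 1 ≠ 0 := by
    by_cases h0 : u 0 = 0
    · have h1 : u 1 ≠ 0 := fun h1 => hu (funext fun i => by fin_cases i <;> assumption)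
      exact ⟨1, 0, by simpa [h0] using h1⟩
    · exact ⟨0, 1, by simpa using h0⟩
  have hP : IsUnit !![u 0, a; u 1, b] :=
    (isUnit_iff_isUnit_det _).mpr (by simpa [det_fin_two] using hdet)
  refine ⟨hP.unit, funext fun i => ?_⟩
  fin_cases i <;> simp

theorem exists_units_conj_apply_one_zero_eq_zero_iff {ι : Type*}
    (A : ι → Matrix (Fin 2) (Fin 2) K) :
    (∃ U : (Matrix (Fin 2) (Fin 2) K)ˣ,
      ∀ i, ((U : Matrix (Fin 2) (Fin 2) K) * A i * (↑U⁻¹ : Matrix (Fin 2) (Fin 2) K)) 1 0 = 0) ↔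
      ∃ v ≠ 0, ∀ i, ∃ μ : K, A i *ᵥ v = μ • v := by
  simp only [apply_one_zero_eq_zero_iff, units_conj_mulVec_eq_smul_iff]
  constructor
  · rintro ⟨U, hU⟩
    refine ⟨_, fun h => ?_, hU⟩
    have h1 := congrArg ((U : Matrix (Fin 2) (Fin 2) K) *ᵥ ·) h
    simp only [mulVec_mulVec, Units.mul_inv, one_mulVec, mulVec_zero] at h1
    simpa using congrFun h1 0
  · rintro ⟨v, hv, hvA⟩
    obtain ⟨P, rfl⟩ := exists_units_mulVec_single_eq hv
    exact ⟨P⁻¹, by simpa using hvA⟩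

lemma mul_self_eq_one_of_mulVec_eq_smul {n : Type*} [Fintype n] [DecidableEq n]
    {B : Matrix n n K} (hB : B * B = 1) {v : n → K} (hv : v ≠ 0) {ε : K}
    (h : B *ᵥ v = ε • v) : ε * ε = 1 := by
  refine smul_left_injective K hv ?_
  calc (ε * ε) • v = B *ᵥ (B *ᵥ v) := by rw [h, mulVec_smul, h, smul_smul]
    _ = (1 : K) • v := by rw [mulVec_mulVec, hB, one_mulVec, one_smul]

lemma exists_eq_smul_of_mulVec_eq_zero {D : Matrix (Fin 2) (Fin 2) K} (hD : D ≠ 0)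
    {x y : Fin 2 → K} (hy : y ≠ 0) (hDx : D *ᵥ x = 0) (hDy : D *ᵥ y = 0) :
    ∃ t : K, x = t • y := by
  have hcross : x 0 * y 1 = x 1 * y 0 := by
    obtain ⟨i, j, hij⟩ : ∃ i j, D i j ≠ 0 := by
      by_contra! h
      exact hD (ext h)
    have hxi := congrFun hDx i
    have hyi := congrFun hDy i
    simp only [mulVec, dotProduct, Fin.sum_univ_two, Pi.zero_apply] at hxi hyi
    rcases Fin.exists_fin_two.mp (⟨j, hij⟩ : ∃ j, D i j ≠ 0) with hij | hij
    · exact mul_left_cancel₀ hij (by linear_combination y 1 * hxi - x 1 * hyi)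
    · exact mul_left_cancel₀ hij (by linear_combination x 0 * hyi - y 0 * hxi)
  by_cases hy0 : y 0 = 0
  · have hy1 : y 1 ≠ 0 := fun hy1 => hy (funext fun i => by fin_cases i <;> assumption)
    refine ⟨x 1 / y 1, funext <| Fin.forall_fin_two.mpr ⟨?_, ?_⟩⟩
    · simpa [hy0, hy1] using hcross
    · simp [hy1]
  · refine ⟨x 0 / y 0, funext <| Fin.forall_fin_two.mpr ⟨?_, ?_⟩⟩
    · simp [hy0]
    · rw [Pi.smul_apply, smul_eq_mul, div_mul_eq_mul_div, eq_div_iff hy0]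
      linear_combination -hcross

end Matrix

lemma exists_eq_smul_of_comp_eq_smul {n : Type*} (f : K →+* L) {u w : n → K} (hu : u ≠ 0)
    {μ : L} (h : f ∘ w = μ • (f ∘ u)) : ∃ t : K, w = t • u := by
  obtain ⟨i, hi⟩ := Function.ne_iff.mp hu
  have hμ : μ = f (w i / u i) := by
    have hwi : f (w i) = μ * f (u i) := congrFun h i
    rw [map_div₀, hwi, mul_div_cancel_right₀ _ ((map_ne_zero f).mpr hi)]
  refine ⟨w i / u i, funext fun j => f.injective ?_⟩
  simpa [hμ] using congrFun h j

theorem exists_common_eigenvector_of_map {ι : Type*} (f : K →+* L)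
    (A : ι → Matrix (Fin 2) (Fin 2) K) (c : ι)
    (hc2 : A c * A c = 1) (hc1 : A c ≠ 1) (hcneg : A c ≠ -1)
    (h : ∃ v ≠ 0, ∀ i, ∃ μ : L, (A i).map f *ᵥ v = μ • v) :
    ∃ u ≠ 0, ∀ i, ∃ t : K, A i *ᵥ u = t • u := by
  obtain ⟨v, hv, hvA⟩ := h
  obtain ⟨ε, hε⟩ := hvA c
  have hε2 : ε * ε = 1 :=
    mul_self_eq_one_of_mulVec_eq_smul
      (by rw [← Matrix.map_mul, hc2, Matrix.map_one _ f.map_zero f.map_one]) hv hε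
  obtain ⟨ε', hD, rfl⟩ : ∃ ε' : K, A c - ε' • 1 ≠ 0 ∧ f ε' = ε := by
    rcases mul_self_eq_one_iff.mp hε2 with rfl | rfl
    · exact ⟨1, by simpa [sub_eq_zero] using hc1, map_one f⟩
    · exact ⟨-1, by simpa [sub_eq_zero, add_eq_zero_iff_eq_neg] using hcneg, by simp⟩
  have hDv : (A c - ε' • 1).map f *ᵥ v = 0 := by
    rw [Matrix.map_sub _ (map_sub f), Matrix.map_smul' _ _ _ (map_mul f),
      Matrix.map_one _ f.map_zero f.map_one, sub_mulVec, hε, smul_mulVec, one_mulVec, sub_self]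
  have hdet : (A c - ε' • 1).det = 0 := by
    apply f.injective
    rw [RingHom.map_det, map_zero]
    exact exists_mulVec_eq_zero_iff.mp ⟨v, hv, hDv⟩
  obtain ⟨u, hu, hDu⟩ := exists_mulVec_eq_zero_iff.mpr hdet
  obtain ⟨s, hs⟩ : ∃ s : L, f ∘ u = s • v :=
    exists_eq_smul_of_mulVec_eq_zero (by simpa using (map_injective f.injective).ne hD) hv
      (by rw [← funext (f.map_mulVec _ u), hDu]; exact funext fun _ => map_zero f) hDv
  refine ⟨u, hu, fun i => ?_⟩
  obtain ⟨μ, hμ⟩ := hvA i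
  refine exists_eq_smul_of_comp_eq_smul f hu (μ := μ) ?_
  calc f ∘ (A i *ᵥ u) = (A i).map f *ᵥ (f ∘ u) := funext (f.map_mulVec _ u)
    _ = μ • (f ∘ u) := by rw [hs, mulVec_smul, hμ, smul_comm]

theorem stmt_7_general (K G : Type) [Field K] [Group G]
    (ρ : G →* GL (Fin 2) K) (c : G)
    (hc2 : ρ c ^ 2 = 1) (hc1 : ρ c ≠ 1) (hcneg : ρ c ≠ -1)
    (hext : ∃ (L : Type) (_ : Field L) (f : K →+* L)
        (M : Matrix (Fin 2) (Fin 2) L), IsUnit M ∧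
        ∀ g : G, (M * ((ρ g : Matrix (Fin 2) (Fin 2) K)).map f * M⁻¹) 1 0 = 0) :
    ∃ U : (Matrix (Fin 2) (Fin 2) K)ˣ, ∀ g : G,
      ((U : Matrix (Fin 2) (Fin 2) K) * (ρ g : Matrix (Fin 2) (Fin 2) K) *
        (↑U⁻¹ : Matrix (Fin 2) (Fin 2) K)) 1 0 = 0 := by
  obtain ⟨L, _, f, M, hM, hMtri⟩ := hext
  have hL : ∃ v ≠ 0, ∀ g, ∃ μ : L, (ρ g : Matrix (Fin 2) (Fin 2) K).map f *ᵥ v = μ • v := by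
    refine (exists_units_conj_apply_one_zero_eq_zero_iff _).mp ⟨hM.unit, fun g => ?_⟩
    simpa [coe_units_inv] using hMtri g
  refine (exists_units_conj_apply_one_zero_eq_zero_iff _).mpr
    (exists_common_eigenvector_of_map f (fun g => ρ g) c ?_ ?_ ?_ hL)
  · simpa [sq] using congrArg Units.val hc2
  · exact fun h => hc1 (Units.ext h)
  · exact fun h => hcneg (Units.ext (by simpa using h))

theorem stmt_7 (K G : Type) [Field K] [Group G] (hchar : ringChar K ≠ 2)
    (ρ : G →* GL (Fin 2) K) (c : G)
    (hc2 : ρ c ^ 2 = 1) (hc1 : ρ c ≠ 1) (hcneg : ρ c ≠ -1)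
    (hext : ∃ (L : Type) (_ : Field L) (f : K →+* L)
        (M : Matrix (Fin 2) (Fin 2) L), IsUnit M ∧
        ∀ g : G, (M * ((ρ g : Matrix (Fin 2) (Fin 2) K)).map f * M⁻¹) 1 0 = 0) :
    ∃ U : (Matrix (Fin 2) (Fin 2) K)ˣ, ∀ g : G,
      ((U : Matrix (Fin 2) (Fin 2) K) * (ρ g : Matrix (Fin 2) (Fin 2) K) *
        (↑U⁻¹ : Matrix (Fin 2) (Fin 2) K)) 1 0 = 0 :=
  stmt_7_general K G ρ c hc2 hc1 hcneg hext
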